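/- arXiv:2011.07725 — 2 statements merged into one kernel-verified Lean document; each statement's English description precedes it below -/
import Mathlib

section
/- Let f : ℝ × ℝ × ℝ × ℝ → ℝ, let δ and σ be real constants with δ ∉ {0, 1} and σ ≠ 0, and let u₀, v₀, v_∞ ∈ ℝ with v_∞ ≠ 0. Suppose u : ℝ → ℝ is three times differentiable and solves the BVP: u'''(x) = f(x, u(x), u'(x), u''(x)) for all x ≥ 0, u(0) = u₀, u'(0) = v₀, and u'(x) → v_∞ as x → ∞. Then for every λ > 0, setting h* := λ^σ, the function u*(x) := λ · u(λ^{−δ} x) satisfies the extended equation with parameter h*, i.e. u*'''(x) = h*^{(1−3δ)/σ} f(h*^{−δ/σ} x, h*^{−1/σ} u*(x), h*^{(δ−1)/σ} u*'(x), h*^{(2δ−1)/σ} u*''(x)) for all x ≥ 0, together with u*(0) = h*^{1/σ} u₀, u*'(0) = h*^{(1−δ)/σ} v₀, and u*'(x) → λ^{1−δ} v_∞ as x → ∞; consequently, writing L for the limit of u*' at infinity, one has (L / v_∞)^{1/(1−δ)} = h*^{1/σ} and hence Γ := ((L / v_∞)^{1/(1−δ)})^{−σ} · h* − 1 = 0.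 -/
open Real Filter Topology

/-- `u` is three times differentiable. -/
def ThreeDiff (u : ℝ → ℝ) : Prop :=
  Differentiable ℝ u ∧ Differentiable ℝ (deriv u) ∧ Differentiable ℝ (deriv (deriv u))

/-- The extended equation with parameter `h` (powers are real powers of the positive real `h`). -/
def ExtEq (f : ℝ × ℝ × ℝ × ℝ → ℝ) (δ σ h : ℝ) (u : ℝ → ℝ) : Prop :=
  ∀ x : ℝ, 0 ≤ x → deriv (deriv (deriv u)) x =
    h ^ ((1 - 3 * δ) / σ) *
      f (h ^ (-δ / σ) * x, h ^ (-1 / σ) * u x,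
         h ^ ((δ - 1) / σ) * deriv u x, h ^ ((2 * δ - 1) / σ) * deriv (deriv u) x)

/-- `u` solves the BVP (1.1). -/
def SolvesBVP (f : ℝ × ℝ × ℝ × ℝ → ℝ) (u₀ v₀ vinf : ℝ) (u : ℝ → ℝ) : Prop :=
  ThreeDiff u ∧
  (∀ x : ℝ, 0 ≤ x → deriv (deriv (deriv u)) x = f (x, u x, deriv u x, deriv (deriv u) x)) ∧
  u 0 = u₀ ∧ deriv u 0 = v₀ ∧ Tendsto (deriv u) atTop (𝓝 vinf)

private lemma deriv_scale (v : ℝ → ℝ) (hv : Differentiable ℝ v) (a c : ℝ) :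
    deriv (fun x => a * v (c * x)) = fun x => a * c * deriv v (c * x) := by
  funext x
  have h1 : HasDerivAt (fun x : ℝ => v (c * x)) (deriv v (c * x) * (c * 1)) x :=
    (hv (c * x)).hasDerivAt.comp x ((hasDerivAt_id x).const_mul c)
  have h2 := h1.const_mul a
  rw [h2.deriv]; ring

theorem stmt1 (f : ℝ × ℝ × ℝ × ℝ → ℝ) (δ σ : ℝ) (hδ0 : δ ≠ 0) (hδ1 : δ ≠ 1) (hσ : σ ≠ 0)
    (u₀ v₀ vinf : ℝ) (hvinf : vinf ≠ 0)
    (u : ℝ → ℝ) (hsol : SolvesBVP f u₀ v₀ vinf u) :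
    ∀ lam : ℝ, 0 < lam → ∀ hstar : ℝ, hstar = lam ^ σ →
    ∀ ustar : ℝ → ℝ, ustar = (fun x => lam * u (lam ^ (-δ) * x)) →
    ExtEq f δ σ hstar ustar ∧
    ustar 0 = hstar ^ (1 / σ) * u₀ ∧
    deriv ustar 0 = hstar ^ ((1 - δ) / σ) * v₀ ∧
    Tendsto (deriv ustar) atTop (𝓝 (lam ^ (1 - δ) * vinf)) ∧
    (∀ L : ℝ, Tendsto (deriv ustar) atTop (𝓝 L) →
      (L / vinf) ^ (1 / (1 - δ)) = hstar ^ (1 / σ) ∧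
      ((L / vinf) ^ (1 / (1 - δ))) ^ (-σ) * hstar - 1 = 0) := by
  obtain ⟨⟨hd0, hd1, hd2⟩, heq, hu0, hv0, hlim⟩ := hsol
  intro lam hlam hstar hh ustar hus
  set c : ℝ := lam ^ (-δ) with hc
  have hcpos : 0 < c := Real.rpow_pos_of_pos hlam _
  -- key power identity
  have key : ∀ t : ℝ, hstar ^ (t / σ) = lam ^ t := by
    intro t
    rw [hh, ← Real.rpow_mul hlam.le]
    congr 1
    field_simp
  have hP : ∀ a b : ℝ, lam ^ a * lam ^ b = lam ^ (a + b) :=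
    fun a b => (Real.rpow_add hlam a b).symm
  have hl1 : lam ^ (1 : ℝ) = lam := Real.rpow_one lam
  have hmul : ∀ a : ℝ, lam * lam ^ a = lam ^ (1 + a) := by
    intro a; nth_rewrite 1 [← hl1]; rw [hP]
  have hmul' : ∀ a : ℝ, lam ^ a * lam = lam ^ (a + 1) := by
    intro a; nth_rewrite 2 [← hl1]; rw [hP]
  -- derivatives of ustar
  have d1 : deriv ustar = fun x => lam * c * deriv u (c * x) := by
    rw [hus]; exact deriv_scale u hd0 lam c
  have d2 : deriv (deriv ustar) = fun x => lam * c * c * deriv (deriv u) (c * x) := by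
    rw [d1]
    exact deriv_scale (deriv u) hd1 (lam * c) c
  have d3 : deriv (deriv (deriv ustar)) =
      fun x => lam * c * c * c * deriv (deriv (deriv u)) (c * x) := by
    rw [d2]
    exact deriv_scale (deriv (deriv u)) hd2 (lam * c * c) c
  have hlc : lam * c = lam ^ (1 - δ) := by
    rw [hc, hmul]; congr 1
  refine ⟨?_, ?_, ?_, ?_, ?_⟩
  · -- ExtEq
    intro x hx
    have hcx : (0 : ℝ) ≤ c * x := mul_nonneg hcpos.le hx
    rw [d3, d2, d1, hus]
    simp only
    rw [heq (c * x) hcx]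
    have e0 : lam * c * c * c = lam ^ (1 - 3 * δ) := by
      rw [hc, hmul, hP, hP]; congr 1; ring
    have e2 : lam ^ (-1 : ℝ) * (lam * u (c * x)) = u (c * x) := by
      rw [← mul_assoc, hmul']
      norm_num
    have e3 : lam ^ (δ - 1) * (lam * c * deriv u (c * x)) = deriv u (c * x) := by
      rw [hlc, ← mul_assoc, hP]; norm_num
    have e4 : lam ^ (2 * δ - 1) * (lam * c * c * deriv (deriv u) (c * x)) =
        deriv (deriv u) (c * x) := by
      have : lam * c * c = lam ^ (1 - 2 * δ) := by
        rw [hc, hmul, hP]; congr 1; ring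
      rw [this, ← mul_assoc, hP]; norm_num
    rw [key, key, key, key, key, e2, e3, e4, e0]
  · rw [hus]; simp only [mul_zero]
    rw [hu0, key 1, hl1]
  · rw [d1]; simp only [mul_zero]
    rw [hv0, key, hlc]
  · rw [d1, ← hlc]
    have hcx : Tendsto (fun x : ℝ => c * x) atTop atTop :=
      Tendsto.const_mul_atTop hcpos tendsto_id
    have := (hlim.comp hcx).const_mul (lam * c)
    simpa using this
  · intro L hL
    have hLe : L = lam ^ (1 - δ) * vinf := by
      have hlim2 : Tendsto (deriv ustar) atTop (𝓝 (lam ^ (1 - δ) * vinf)) := by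
        rw [d1, ← hlc]
        have hcx : Tendsto (fun x : ℝ => c * x) atTop atTop :=
          Tendsto.const_mul_atTop hcpos tendsto_id
        have := (hlim.comp hcx).const_mul (lam * c)
        simpa using this
      exact tendsto_nhds_unique hL hlim2
    have h1δ : (1 : ℝ) - δ ≠ 0 := sub_ne_zero.mpr (Ne.symm hδ1)
    have hLv : L / vinf = lam ^ (1 - δ) := by
      rw [hLe]; field_simp
    have hr : (L / vinf) ^ (1 / (1 - δ)) = lam := by
      rw [hLv, ← Real.rpow_mul hlam.le]
      rw [show (1 - δ) * (1 / (1 - δ)) = 1 by field_simp]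
      exact hl1
    constructor
    · rw [hr, key 1, hl1]
    · rw [hr, hh, ← Real.rpow_add hlam]; norm_num
end

section
/- Let f : ℝ × ℝ × ℝ × ℝ → ℝ, let δ and σ be real constants with δ ∉ {0, 1/2, 1} and σ ≠ 0, and let u₀, v₀, v_∞, w₀ ∈ ℝ with v_∞ ≠ 0 and w₀ ≠ 0. Assume: (i) for every h* > 0 there is exactly one three times differentiable function u*_{h*} : ℝ → ℝ satisfying the extended equation with parameter h* for all x ≥ 0 together with u*_{h*}(0) = h*^{1/σ} u₀, u*_{h*}'(0) = h*^{(1−δ)/σ} v₀ and u*_{h*}''(0) = w₀; (ii) for every h* > 0 the limit L(h*) := lim_{x→∞} u*_{h*}'(x) exists and L(h*)/v_∞ > 0; (iii) every three times differentiable solution u of the BVP (1.1) satisfies u''(0)/w₀ > 0. Define λ(h*) := (L(h*)/v_∞)^{1/(1−δ)} and the transformation function Γ(h*) := λ(h*)^{−σ} · h* − 1. Then the map sending h* to the function x ↦ λ(h*)^{−1} · u*_{h*}(λ(h*)^{δ} x) is a bijection from the set { h* > 0 : Γ(h*) = 0 } onto the set of three times differentiable solutions of the BVP (1.1). -/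
open Real Filter Topology

lemma derivScale (g : ℝ → ℝ) (hg : Differentiable ℝ g) (a c : ℝ) :
    deriv (fun x => a * g (c * x)) = fun x => a * c * deriv g (c * x) := by
  funext x
  have h0 : HasDerivAt (fun x : ℝ => c * x) c x := by
    simpa using (hasDerivAt_id x).const_mul c
  have h1 : HasDerivAt (fun x => g (c * x)) (deriv g (c * x) * c) x :=
    ((hg (c * x)).hasDerivAt).comp x h0
  have h2 : HasDerivAt (fun x => a * g (c * x)) (a * (deriv g (c * x) * c)) x :=
    h1.const_mul a
  simpa [mul_comm, mul_assoc, mul_left_comm] using h2.deriv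

lemma scaleProps (g : ℝ → ℝ) (hg : ThreeDiff g) (a c : ℝ) :
    ThreeDiff (fun x => a * g (c * x)) ∧
    deriv (fun x => a * g (c * x)) = (fun x => a * c * deriv g (c * x)) ∧
    deriv (deriv (fun x => a * g (c * x))) = (fun x => a * c * c * deriv (deriv g) (c * x)) ∧
    deriv (deriv (deriv (fun x => a * g (c * x)))) =
      (fun x => a * c * c * c * deriv (deriv (deriv g)) (c * x)) := by
  obtain ⟨h1, h2, h3⟩ := hg
  have hc : Differentiable ℝ fun x : ℝ => c * x := differentiable_id.const_mul c
  have d1 := derivScale g h1 a c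
  have d2 := derivScale (deriv g) h2 (a * c) c
  have d3 := derivScale (deriv (deriv g)) h3 (a * c * c) c
  have e2 : deriv (deriv (fun x => a * g (c * x))) =
      fun x => a * c * c * deriv (deriv g) (c * x) := by rw [d1]; rw [d2]
  have e3 : deriv (deriv (deriv (fun x => a * g (c * x)))) =
      fun x => a * c * c * c * deriv (deriv (deriv g)) (c * x) := by rw [e2]; rw [d3]
  refine ⟨⟨(h1.comp hc).const_mul a, ?_, ?_⟩, d1, e2, e3⟩
  · rw [d1]; exact (h2.comp hc).const_mul (a * c)
  · rw [e2]; exact (h3.comp hc).const_mul (a * c * c)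

theorem stmt5 (f : ℝ × ℝ × ℝ × ℝ → ℝ) (δ σ : ℝ)
    (hδ0 : δ ≠ 0) (hδh : δ ≠ 1 / 2) (hδ1 : δ ≠ 1) (hσ : σ ≠ 0)
    (u₀ v₀ vinf w₀ : ℝ) (hvinf : vinf ≠ 0) (hw₀ : w₀ ≠ 0)
    (ustar : ℝ → ℝ → ℝ) (L : ℝ → ℝ)
    -- (i) existence and uniqueness of the solution of the extended IVP for every h* > 0
    (hivp_ex : ∀ h : ℝ, 0 < h →
      ThreeDiff (ustar h) ∧ ExtEq f δ σ h (ustar h) ∧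
      ustar h 0 = h ^ (1 / σ) * u₀ ∧ deriv (ustar h) 0 = h ^ ((1 - δ) / σ) * v₀ ∧
      deriv (deriv (ustar h)) 0 = w₀)
    (hivp_uniq : ∀ h : ℝ, 0 < h → ∀ v : ℝ → ℝ,
      ThreeDiff v → ExtEq f δ σ h v →
      v 0 = h ^ (1 / σ) * u₀ → deriv v 0 = h ^ ((1 - δ) / σ) * v₀ →
      deriv (deriv v) 0 = w₀ → v = ustar h)
    -- (ii) the limit of the first derivative at infinity exists and L(h*)/v∞ > 0
    (hlim : ∀ h : ℝ, 0 < h → Tendsto (deriv (ustar h)) atTop (𝓝 (L h)))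
    (hLpos : ∀ h : ℝ, 0 < h → 0 < L h / vinf)
    -- (iii) every solution of the BVP has u''(0)/w₀ > 0
    (hsign : ∀ u : ℝ → ℝ, SolvesBVP f u₀ v₀ vinf u → 0 < deriv (deriv u) 0 / w₀)
    (lam Γ : ℝ → ℝ)
    (hlam : ∀ h : ℝ, lam h = (L h / vinf) ^ (1 / (1 - δ)))
    (hΓ : ∀ h : ℝ, Γ h = lam h ^ (-σ) * h - 1) :
    Set.BijOn (fun h : ℝ => fun x : ℝ => (lam h)⁻¹ * ustar h (lam h ^ δ * x))
      {h : ℝ | 0 < h ∧ Γ h = 0} {u : ℝ → ℝ | SolvesBVP f u₀ v₀ vinf u} := by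
  have key : ∀ h : ℝ, 0 < h → Γ h = 0 →
      SolvesBVP f u₀ v₀ vinf (fun x : ℝ => (lam h)⁻¹ * ustar h (lam h ^ δ * x)) ∧
      deriv (deriv (fun x : ℝ => (lam h)⁻¹ * ustar h (lam h ^ δ * x))) 0 =
        lam h ^ (2 * δ - 1) * w₀ := by
    intro h hp hΓ0
    obtain ⟨hTD, hEE, hu0, hv0, hw0⟩ := hivp_ex h hp
    have lpos : 0 < lam h := by
      rw [hlam]; exact rpow_pos_of_pos (hLpos h hp) _
    set l := lam h with hl
    have mulpow : ∀ a b : ℝ, l ^ a * l ^ b = l ^ (a + b) := fun a b =>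
      (rpow_add lpos a b).symm
    have linv : l⁻¹ = l ^ (-1 : ℝ) := (rpow_neg_one l).symm
    -- h = l ^ σ
    have hδ1' : (1 - δ : ℝ) ≠ 0 := sub_ne_zero.2 (fun h1 => hδ1 h1.symm)
    have hhl : h = l ^ σ := by
      have h1 := hΓ h
      rw [hΓ0] at h1
      have h2 : l ^ (-σ) * h = 1 := by rw [hl]; linarith
      rw [rpow_neg lpos.le] at h2
      have h3 : (0:ℝ) < l ^ σ := rpow_pos_of_pos lpos _
      field_simp at h2
      linarith
    have hpow : ∀ e : ℝ, h ^ (e / σ) = l ^ e := by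
      intro e
      rw [hhl, ← rpow_mul lpos.le]
      congr 1
      field_simp
    have hl1δ : l ^ (1 - δ) = L h / vinf := by
      rw [hl, hlam, ← rpow_mul (le_of_lt (hLpos h hp)), one_div,
        inv_mul_cancel₀ hδ1', rpow_one]
    obtain ⟨sTD, sd1, sd2, sd3⟩ := scaleProps (ustar h) hTD l⁻¹ (l ^ δ)
    have cpos : (0:ℝ) < l ^ δ := rpow_pos_of_pos lpos _
    have sd2' : deriv (deriv (fun x : ℝ => l⁻¹ * ustar h (l ^ δ * x))) 0 =
        l ^ (2 * δ - 1) * w₀ := by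
      rw [sd2]
      simp only [mul_zero, hw0]
      rw [linv, mulpow, mulpow, show (-1 : ℝ) + δ + δ = 2 * δ - 1 by ring]
    refine ⟨⟨sTD, ?_, ?_, ?_, ?_⟩, sd2'⟩
    · -- the ODE
      intro x hx
      simp only [sd3]
      simp only [sd2]
      simp only [sd1]
      have hcx : (0:ℝ) ≤ l ^ δ * x := by positivity
      rw [hEE (l ^ δ * x) hcx, hpow, hpow, hpow, hpow, hpow]
      have B : l ^ (-δ) * (l ^ δ * x) = x := by
        rw [← mul_assoc, mulpow, show (-δ) + δ = (0:ℝ) by ring, rpow_zero, one_mul]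
      have D : l ^ (δ - 1) = l⁻¹ * l ^ δ := by
        rw [linv, mulpow, show (-1 : ℝ) + δ = δ - 1 by ring]
      have E : l ^ (2 * δ - 1) = l⁻¹ * l ^ δ * l ^ δ := by
        rw [linv, mulpow, mulpow, show (-1 : ℝ) + δ + δ = 2 * δ - 1 by ring]
      have A : l⁻¹ * l ^ δ * l ^ δ * l ^ δ * l ^ (1 - 3 * δ) = 1 := by
        rw [linv, mulpow, mulpow, mulpow, mulpow,
          show (-1 : ℝ) + δ + δ + δ + (1 - 3 * δ) = 0 by ring, rpow_zero]
      rw [B, rpow_neg_one, D, E, ← mul_assoc, A, one_mul]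
    · -- u 0 = u₀
      simp only [mul_zero, hu0, hpow]
      rw [rpow_one, inv_mul_cancel_left₀ lpos.ne']
    · -- u' 0 = v₀
      rw [sd1]
      simp only [mul_zero, hv0, hpow]
      rw [linv, mulpow, ← mul_assoc, mulpow,
        show (-1 : ℝ) + δ + (1 - δ) = 0 by ring, rpow_zero, one_mul]
    · -- limit
      rw [sd1]
      have hcomp : Tendsto (fun x : ℝ => l ^ δ * x) atTop atTop :=
        tendsto_id.const_mul_atTop cpos
      have h1 : Tendsto (fun x : ℝ => deriv (ustar h) (l ^ δ * x)) atTop (𝓝 (L h)) :=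
        (hlim h hp).comp hcomp
      have h2 := h1.const_mul (l⁻¹ * l ^ δ)
      have h3 : l⁻¹ * l ^ δ * L h = vinf := by
        have h4 : L h = l ^ (1 - δ) * vinf := by rw [hl1δ]; field_simp
        rw [h4, linv, mulpow, ← mul_assoc, mulpow,
          show (-1 : ℝ) + δ + (1 - δ) = 0 by ring, rpow_zero, one_mul]
      rw [h3] at h2
      exact h2
  refine ⟨fun h hh => (key h hh.1 hh.2).1, ?_, ?_⟩
  · -- InjOn
    intro h1 hh1 h2 hh2 heq
    obtain ⟨-, hk1⟩ := key h1 hh1.1 hh1.2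
    obtain ⟨-, hk2⟩ := key h2 hh2.1 hh2.2
    have l1pos : 0 < lam h1 := by
      rw [hlam]; exact rpow_pos_of_pos (hLpos h1 hh1.1) _
    have l2pos : 0 < lam h2 := by
      rw [hlam]; exact rpow_pos_of_pos (hLpos h2 hh2.1) _
    have hexp : (2 * δ - 1 : ℝ) ≠ 0 := by
      intro h0; apply hδh; linarith
    have hpoweq : lam h1 ^ (2 * δ - 1) = lam h2 ^ (2 * δ - 1) := by
      have heq' : (fun x : ℝ => (lam h1)⁻¹ * ustar h1 (lam h1 ^ δ * x)) =
          (fun x : ℝ => (lam h2)⁻¹ * ustar h2 (lam h2 ^ δ * x)) := heq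
      rw [heq', hk2] at hk1
      exact (mul_right_cancel₀ hw₀ hk1).symm
    have hlameq : lam h1 = lam h2 := by
      have e1 : (lam h1 ^ (2 * δ - 1)) ^ ((2 * δ - 1)⁻¹) = lam h1 := by
        rw [← rpow_mul l1pos.le, mul_inv_cancel₀ hexp, rpow_one]
      have e2 : (lam h2 ^ (2 * δ - 1)) ^ ((2 * δ - 1)⁻¹) = lam h2 := by
        rw [← rpow_mul l2pos.le, mul_inv_cancel₀ hexp, rpow_one]
      rw [← e1, ← e2, hpoweq]
    -- h = lam h ^ σ for both
    have hσ1 : h1 = lam h1 ^ σ := by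
      have g1 := hΓ h1
      rw [hh1.2] at g1
      have g2 : lam h1 ^ (-σ) * h1 = 1 := by linarith
      rw [rpow_neg l1pos.le] at g2
      have g3 : (0:ℝ) < lam h1 ^ σ := rpow_pos_of_pos l1pos _
      field_simp at g2
      linarith
    have hσ2 : h2 = lam h2 ^ σ := by
      have g1 := hΓ h2
      rw [hh2.2] at g1
      have g2 : lam h2 ^ (-σ) * h2 = 1 := by linarith
      rw [rpow_neg l2pos.le] at g2
      have g3 : (0:ℝ) < lam h2 ^ σ := rpow_pos_of_pos l2pos _
      field_simp at g2
      linarith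
    rw [hσ1, hσ2, hlameq]
  · -- SurjOn
    intro u hu
    obtain ⟨huTD, huODE, hu0, hv0', hulim⟩ := hu
    have hW : 0 < deriv (deriv u) 0 / w₀ :=
      hsign u ⟨huTD, huODE, hu0, hv0', hulim⟩
    set W := deriv (deriv u) 0 with hWd
    have hWne : W ≠ 0 := by
      intro h0; rw [h0] at hW; simp at hW
    have hexp : (2 * δ - 1 : ℝ) ≠ 0 := by
      intro h0; apply hδh; linarith
    set μ : ℝ := (W / w₀) ^ ((2 * δ - 1)⁻¹) with hμdef
    have μpos : 0 < μ := rpow_pos_of_pos hW _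
    have mulpow : ∀ a b : ℝ, μ ^ a * μ ^ b = μ ^ (a + b) := fun a b =>
      (rpow_add μpos a b).symm
    have hμ2δ : μ ^ (2 * δ - 1) = W / w₀ := by
      rw [hμdef, ← rpow_mul hW.le, inv_mul_cancel₀ hexp, rpow_one]
    -- key products
    have m1 : μ * μ ^ (-δ) = μ ^ (1 - δ) := by
      rw [rpow_sub μpos, rpow_one, rpow_neg μpos.le, div_eq_mul_inv]
    have m2 : μ * μ ^ (-δ) * μ ^ (-δ) = μ ^ (1 - 2 * δ) := by
      rw [m1, mulpow, show (1 - δ) + -δ = 1 - 2 * δ by ring]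
    have m3 : μ * μ ^ (-δ) * μ ^ (-δ) * μ ^ (-δ) = μ ^ (1 - 3 * δ) := by
      rw [m2, mulpow, show (1 - 2 * δ) + -δ = 1 - 3 * δ by ring]
    set h : ℝ := μ ^ σ with hhdef
    have hp : 0 < h := rpow_pos_of_pos μpos _
    have hpow : ∀ e : ℝ, h ^ (e / σ) = μ ^ e := by
      intro e
      rw [hhdef, ← rpow_mul μpos.le]
      congr 1
      field_simp
    obtain ⟨vTD, vd1, vd2, vd3⟩ := scaleProps u huTD μ (μ ^ (-δ))
    have μ1 : μ = μ ^ (1:ℝ) := (rpow_one μ).symm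
    -- v satisfies the extended IVP
    have hvExt : ExtEq f δ σ h (fun y => μ * u (μ ^ (-δ) * y)) := by
      intro y hy
      simp only [vd3]
      simp only [vd2]
      simp only [vd1]
      beta_reduce
      have harg : (0:ℝ) ≤ μ ^ (-δ) * y := by positivity
      rw [huODE (μ ^ (-δ) * y) harg, hpow, hpow, hpow, hpow, hpow]
      have c2 : μ ^ (-1 : ℝ) * (μ * u (μ ^ (-δ) * y)) = u (μ ^ (-δ) * y) := by
        rw [← mul_assoc, rpow_neg_one, inv_mul_cancel₀ μpos.ne', one_mul]
      have c3 : μ ^ (δ - 1) * (μ * μ ^ (-δ) * deriv u (μ ^ (-δ) * y)) =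
          deriv u (μ ^ (-δ) * y) := by
        rw [m1, ← mul_assoc, mulpow, show (δ - 1) + (1 - δ) = (0:ℝ) by ring,
          rpow_zero, one_mul]
      have c4 : μ ^ (2 * δ - 1) *
          (μ * μ ^ (-δ) * μ ^ (-δ) * deriv (deriv u) (μ ^ (-δ) * y)) =
          deriv (deriv u) (μ ^ (-δ) * y) := by
        rw [m2, ← mul_assoc, mulpow, show (2 * δ - 1) + (1 - 2 * δ) = (0:ℝ) by ring,
          rpow_zero, one_mul]
      rw [c2, c3, c4, m3]
    have hvz : (fun y => μ * u (μ ^ (-δ) * y)) 0 = h ^ (1 / σ) * u₀ := by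
      simp only [mul_zero, hu0]
      rw [hpow, rpow_one]
    have hvz1 : deriv (fun y => μ * u (μ ^ (-δ) * y)) 0 = h ^ ((1 - δ) / σ) * v₀ := by
      rw [vd1]
      simp only [mul_zero, hv0']
      rw [hpow, m1]
    have hvz2 : deriv (deriv (fun y => μ * u (μ ^ (-δ) * y))) 0 = w₀ := by
      rw [vd2]
      simp only [mul_zero]
      rw [← hWd, m2]
      have : μ ^ (1 - 2 * δ) = w₀ / W := by
        rw [show (1 - 2 * δ : ℝ) = -(2 * δ - 1) by ring, rpow_neg μpos.le, hμ2δ]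
        field_simp
      rw [this]
      field_simp
    have huniq := hivp_uniq h hp _ vTD hvExt hvz hvz1 hvz2
    -- L h = μ ^ (1 - δ) * vinf
    have hLh : L h = μ ^ (1 - δ) * vinf := by
      have t1 : Tendsto (fun y : ℝ => μ ^ (-δ) * y) atTop atTop :=
        tendsto_id.const_mul_atTop (rpow_pos_of_pos μpos _)
      have t2 : Tendsto (fun y : ℝ => deriv u (μ ^ (-δ) * y)) atTop (𝓝 vinf) :=
        hulim.comp t1
      have t3 := t2.const_mul (μ * μ ^ (-δ))
      rw [m1] at t3
      have t4 : Tendsto (deriv (ustar h)) atTop (𝓝 (μ ^ (1 - δ) * vinf)) := by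
        rw [← huniq, vd1]
        convert t3 using 2 with y
        rw [m1]
      exact tendsto_nhds_unique (hlim h hp) t4
    have hlamμ : lam h = μ := by
      rw [hlam, hLh]
      have hδ1' : (1 - δ : ℝ) ≠ 0 := sub_ne_zero.2 (fun h1 => hδ1 h1.symm)
      rw [mul_div_assoc, div_self hvinf, mul_one, ← rpow_mul μpos.le, one_div,
        mul_inv_cancel₀ hδ1', rpow_one]
    refine ⟨h, ⟨hp, ?_⟩, ?_⟩
    · rw [hΓ h, hlamμ, hhdef, mulpow, show -σ + σ = (0:ℝ) by ring, rpow_zero]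
      ring
    · funext x
      simp only [hlamμ, ← huniq]
      rw [← mul_assoc, inv_mul_cancel₀ μpos.ne', one_mul, ← mul_assoc, mulpow,
        show -δ + δ = (0:ℝ) by ring, rpow_zero, one_mul]
end
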